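/- arXiv:2205.13200 — 5 statements merged into one kernel-verified Lean document; each statement's English description precedes it below -/
import Mathlib

section
/- Let p̂ be the isotonic least-squares fit of d ∈ ℝ^n. Then for every function h : ℝ → ℝ, ∑_{i=1}^n (d_i − p̂_i) h(p̂_i) = 0; that is, the isotonic fit exactly balances the residuals against any function of the fitted values. -/
/-!
For small `ε` of either sign, `p + ε • (h ∘ p)` is still monotone: ties of `p` receive equal
shifts and strict gaps of `p` survive a small perturbation. So `ε = 0` minimizes
`ε ↦ ∑ (dᵢ - pᵢ - ε h(pᵢ))²`, and Fermat's rule says its derivative `-2 ∑ (dᵢ - pᵢ) h(pᵢ)`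
vanishes there.
-/

open Finset

/-- `p` is the isotonic least-squares fit of `d`. -/
def IsIsoFit {n : ℕ} (d p : Fin n → ℝ) : Prop :=
  Monotone p ∧ ∀ q : Fin n → ℝ, Monotone q →
    ∑ i, (d i - p i) ^ 2 ≤ ∑ i, (d i - q i) ^ 2

open Filter Topology

theorem hasDerivAt_sum_sq_sub_add_mul {ι : Type*} [Fintype ι] (d p v : ι → ℝ) :
    HasDerivAt (fun ε : ℝ => ∑ i, (d i - (p i + ε * v i)) ^ 2)
      (-2 * ∑ i, (d i - p i) * v i) 0 := by
  rw [Finset.mul_sum]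
  refine HasDerivAt.fun_sum fun i _ => ?_
  have := ((((hasDerivAt_id' (0 : ℝ)).mul_const (v i)).const_add (p i)).const_sub (d i)).fun_pow 2
  refine this.congr_deriv ?_
  norm_num
  ring

theorem sum_sub_mul_eq_zero_of_isMinOn {ι : Type*} [Fintype ι] {d p : ι → ℝ}
    {K : Set (ι → ℝ)} (hmin : IsMinOn (fun q => ∑ i, (d i - q i) ^ 2) K p) (v : ι → ℝ)
    (hK : ∀ᶠ ε in 𝓝 (0 : ℝ), (fun i => p i + ε * v i) ∈ K) :
    ∑ i, (d i - p i) * v i = 0 := by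
  have hloc : IsLocalMin (fun ε : ℝ => ∑ i, (d i - (p i + ε * v i)) ^ 2) 0 :=
    hK.mono fun ε hε => by simpa using hmin hε
  have := hloc.hasDerivAt_eq_zero (hasDerivAt_sum_sq_sub_add_mul d p v)
  linarith

theorem Monotone.eventually_monotone_add_mul_comp {ι : Type*} [Preorder ι] [Finite ι]
    {p : ι → ℝ} (hp : Monotone p) (h : ℝ → ℝ) :
    ∀ᶠ ε in 𝓝 (0 : ℝ), Monotone (fun i => p i + ε * h (p i)) := by
  have : ∀ᶠ ε in 𝓝 (0 : ℝ), ∀ ij : ι × ι, ij.1 ≤ ij.2 →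
      p ij.1 + ε * h (p ij.1) ≤ p ij.2 + ε * h (p ij.2) := by
    refine eventually_all.2 fun ⟨i, j⟩ => ?_
    by_cases hij : i ≤ j
    · rcases (hp hij).eq_or_lt with heq | hlt
      · exact .of_forall fun ε _ => by rw [heq]
      · have hcont : ∀ x, Continuous fun ε : ℝ => x + ε * h x := fun x => by fun_prop
        exact ((hcont _).continuousAt.eventually_lt (hcont _).continuousAt (by simpa)).mono
          fun ε hε _ => hε.le
    · exact .of_forall fun ε hij' => absurd hij' hij
  exact this.mono fun ε hε i j hij => hε (i, j) hij

/-- The isotonic fit exactly balances the residuals against any function of the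
fitted values: `∑ (dᵢ - p̂ᵢ) h(p̂ᵢ) = 0` for every `h : ℝ → ℝ`. -/
theorem isotonic_fit_residual_balance {n : ℕ} (d p : Fin n → ℝ) (hp : IsIsoFit d p)
    (h : ℝ → ℝ) :
    ∑ i, (d i - p i) * h (p i) = 0 :=
  sum_sub_mul_eq_zero_of_isMinOn (K := {q | Monotone q}) (fun q hq => hp.2 q hq) _
    (hp.1.eventually_monotone_add_mul_comp h)
end

section
/- (Lemma 1.) Let D_1,…,D_n ∈ {0,1} and Y_1,…,Y_n ∈ ℝ, and let π̂ = (π̂_1,…,π̂_n) be a vector such that on every level set S_c = {j : π̂_j = c}, the value c equals the proportion of treated units in S_c, i.e., c = (∑_{j ∈ S_c} D_j)/|S_c|. Suppose n_1 = ∑_{i=1}^n D_i > 0 and π̂_i < 1 for every i with D_i = 1. Then the propensity-score matching estimator equals the inverse-probability-weighting estimator: (1/n_1) ∑_{i=1}^n D_i { Y_i − (∑_{j=1}^n (1−D_j) Y_j 1{π̂_j = π̂_i}) / (∑_{j=1}^n (1−D_j) 1{π̂_j = π̂_i}) } = (1/n_1) ∑_{j=1}^n { D_j Y_j − (1−D_j)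 Y_j π̂_j/(1−π̂_j) }. -/
open Finset
open scoped Classical

/-!
Group the units by the level sets `S_c` of `π̂`. On `S_c` there are `c |S_c|` treated and
`(1 - c) |S_c|` control units, so each treated unit of `S_c` is matched to the control mean
`A / ((1 - c) |S_c|)`, where `A` is the sum of the control outcomes in `S_c`. Summed over the
treated units this is `A c / (1 - c)`, exactly the weighted control term of the IPW estimator
restricted to `S_c`.
-/

section LevelSets

variable {ι : Type*}

-- For `c = 1` both sides vanish, since there the control count `∑ (1 - D)` and `1 - c` are `0`.
theorem sum_mul_div_sum_one_sub_eq_mul_odds {S : Finset ι} (hS : S.Nonempty) (D : ι → ℝ)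
    (A c : ℝ) (hc : c = (∑ j ∈ S, D j) / S.card) :
    (∑ j ∈ S, D j) * (A / ∑ j ∈ S, (1 - D j)) = A * (c / (1 - c)) := by
  have hcard : (S.card : ℝ) ≠ 0 := Nat.cast_ne_zero.mpr hS.card_pos.ne'
  have hD : ∑ j ∈ S, D j = c * S.card := by rw [hc, div_mul_cancel₀ _ hcard]
  have hND : ∑ j ∈ S, (1 - D j) = (1 - c) * S.card := by
    rw [sum_sub_distrib, hD, sum_const, nsmul_one]; ring
  rw [hD, hND, mul_div_assoc', mul_right_comm, mul_div_mul_right _ _ hcard]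
  ring

theorem sum_matching_eq_sum_ipw_of_level_set [Fintype ι] (D Y πh : ι → ℝ) (c : ℝ)
    (hne : (univ.filter fun j => πh j = c).Nonempty)
    (hc : c = (∑ j ∈ univ.filter (fun j => πh j = c), D j)
      / ((univ.filter fun j => πh j = c).card : ℝ)) :
    ∑ i ∈ univ.filter (fun j => πh j = c), D i * (Y i -
        (∑ j ∈ univ.filter (fun j => πh j = πh i), (1 - D j) * Y j)
          / (∑ j ∈ univ.filter (fun j => πh j = πh i), (1 - D j))) =
    ∑ j ∈ univ.filter (fun j => πh j = c), (D j * Y j - (1 - D j) * Y j * πh j / (1 - πh j)) := by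
  set S := univ.filter fun j => πh j = c
  have hπ : ∀ i ∈ S, πh i = c := fun i hi => (mem_filter.mp hi).2
  have hmatch : ∀ i ∈ S, D i * (Y i -
      (∑ j ∈ univ.filter (fun j => πh j = πh i), (1 - D j) * Y j)
        / (∑ j ∈ univ.filter (fun j => πh j = πh i), (1 - D j))) =
      D i * Y i - D i * ((∑ j ∈ S, (1 - D j) * Y j) / ∑ j ∈ S, (1 - D j)) := by
    intro i hi
    rw [hπ i hi, mul_sub]
  have hipw : ∀ j ∈ S, D j * Y j - (1 - D j) * Y j * πh j / (1 - πh j) =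
      D j * Y j - (1 - D j) * Y j * (c / (1 - c)) := by
    intro j hj
    rw [hπ j hj, mul_div_assoc]
  rw [sum_congr rfl hmatch, sum_congr rfl hipw, sum_sub_distrib (fun i => D i * Y i),
    sum_sub_distrib (fun i => D i * Y i), ← sum_mul, ← sum_mul,
    sum_mul_div_sum_one_sub_eq_mul_odds hne D _ c hc]

end LevelSets

theorem psm_eq_ipw_general {n : ℕ} (D Y πh : Fin n → ℝ)
    (hlevel : ∀ c : ℝ, (Finset.univ.filter (fun j : Fin n => πh j = c)).Nonempty →
      c = (∑ j ∈ Finset.univ.filter (fun j : Fin n => πh j = c), D j)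
        / ((Finset.univ.filter (fun j : Fin n => πh j = c)).card : ℝ)) :
    (1 / ∑ i, D i) * ∑ i, D i * (Y i -
        (∑ j ∈ Finset.univ.filter (fun j : Fin n => πh j = πh i), (1 - D j) * Y j)
          / (∑ j ∈ Finset.univ.filter (fun j : Fin n => πh j = πh i), (1 - D j))) =
    (1 / ∑ i, D i) * ∑ j, (D j * Y j - (1 - D j) * Y j * πh j / (1 - πh j)) := by
  have hmaps : ∀ i ∈ (univ : Finset (Fin n)), πh i ∈ univ.image πh :=
    fun i _ => mem_image_of_mem πh (mem_univ i)
  congr 1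
  rw [← sum_fiberwise_of_maps_to hmaps, ← sum_fiberwise_of_maps_to hmaps]
  refine sum_congr rfl fun c hc => ?_
  obtain ⟨i, -, rfl⟩ := mem_image.mp hc
  have hne : (univ.filter fun j => πh j = πh i).Nonempty := ⟨i, mem_filter.mpr ⟨mem_univ i, rfl⟩⟩
  exact sum_matching_eq_sum_ipw_of_level_set D Y πh _ hne (hlevel _ hne)

/-- Lemma 1: if on every level set of `π̂` the common value equals the treated
fraction of the level set, `n₁ = ∑ Dᵢ > 0`, and `π̂ᵢ < 1` for every treated unit,
then the propensity-score matching estimator equals the inverse-probability-weighting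
estimator. -/
theorem psm_eq_ipw {n : ℕ} (D Y πh : Fin n → ℝ)
    (hD : ∀ i, D i = 0 ∨ D i = 1)
    (hlevel : ∀ c : ℝ, (Finset.univ.filter (fun j : Fin n => πh j = c)).Nonempty →
      c = (∑ j ∈ Finset.univ.filter (fun j : Fin n => πh j = c), D j)
        / ((Finset.univ.filter (fun j : Fin n => πh j = c)).card : ℝ))
    (hn1 : 0 < ∑ i, D i)
    (hlt : ∀ i, D i = 1 → πh i < 1) :
    (1 / ∑ i, D i) * ∑ i, D i * (Y i -
        (∑ j ∈ Finset.univ.filter (fun j : Fin n => πh j = πh i), (1 - D j) * Y j)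
          / (∑ j ∈ Finset.univ.filter (fun j : Fin n => πh j = πh i), (1 - D j))) =
    (1 / ∑ i, D i) * ∑ j, (D j * Y j - (1 - D j) * Y j * πh j / (1 - πh j)) :=
  psm_eq_ipw_general D Y πh hlevel
end

section
/- Let D_1,…,D_n ∈ {0,1} with n_1 = ∑_{i=1}^n D_i > 0, let π̂ be the isotonic least-squares fit of (D_1,…,D_n), and suppose π̂_i < 1 for all i. Then the proposed PSM estimator τ̂ = (1/n_1) ∑_{j=1}^n {D_j Y_j − (1−D_j) Y_j π̂_j/(1−π̂_j)} coincides with the Hirano–Imbens–Ridder estimator τ̃ = (1/∑_{j=1}^n π̂_j) ∑_{j=1}^n {D_j Y_j − (1−D_j) Y_j π̂_j/(1−π̂_j)}; in particular this follows because the isotonic fit satisfies ∑_{i=1}^n π̂_i = ∑_{i=1}^n D_i = n_1. -/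
/-!
Shifting a monotone vector by a constant keeps it monotone, so the isotonic fit `π̂` also
minimises the loss over all shifts `π̂ + c`; the first-order condition at `c = 0` is
`∑ (Dᵢ - π̂ᵢ) = 0`. The two estimators then have the same normalising denominator.
-/

open Finset

section LeastSquares

variable {ι : Type*} [Fintype ι]

theorem sum_sq_sub_add_const (d p : ι → ℝ) (c : ℝ) :
    ∑ i, (d i - (p i + c)) ^ 2 =
      ∑ i, (d i - p i) ^ 2 - 2 * c * ∑ i, (d i - p i) + Fintype.card ι * c ^ 2 := by
  simp only [show ∀ i, (d i - (p i + c)) ^ 2 = (d i - p i) ^ 2 - 2 * c * (d i - p i) + c ^ 2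
    from fun i => by ring, sum_add_distrib, sum_sub_distrib, ← mul_sum, sum_const, card_univ,
    nsmul_eq_mul]

theorem sum_eq_of_sum_sq_le_shift (d p : ι → ℝ)
    (h : ∀ c : ℝ, ∑ i, (d i - p i) ^ 2 ≤ ∑ i, (d i - (p i + c)) ^ 2) :
    ∑ i, p i = ∑ i, d i := by
  set S := ∑ i, (d i - p i) with hS
  set N : ℝ := (Fintype.card ι : ℝ)
  have hN : 0 ≤ N := Nat.cast_nonneg _
  have hshift : ∀ c, 2 * c * S ≤ N * c ^ 2 := fun c => by
    have := h c
    rw [sum_sq_sub_add_const] at this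
    linarith
  have hS0 : S = 0 := by
    -- the shift `t = S / (N + 1)` would lower the loss by `(N + 2) * t ^ 2`
    have hpos : N + 1 ≠ 0 := by positivity
    set t := S / (N + 1)
    have hSt : S = (N + 1) * t := (mul_div_cancel₀ S hpos).symm
    have := hshift t
    rw [hSt] at this ⊢
    nlinarith [sq_nonneg t]
  rw [hS, sum_sub_distrib] at hS0
  linarith

end LeastSquares

theorem IsIsoFit.sum_eq {n : ℕ} {d p : Fin n → ℝ} (hfit : IsIsoFit d p) :
    ∑ i, p i = ∑ i, d i :=
  sum_eq_of_sum_sq_le_shift d p fun c =>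
    hfit.2 (fun i => p i + c) fun _ _ hab => add_le_add_left (hfit.1 hab) c

theorem psm_eq_hir_general {n : ℕ} (D Y πh : Fin n → ℝ)
    (hfit : IsIsoFit D πh) :
    (∑ i, πh i = ∑ i, D i) ∧
    (1 / ∑ i, D i) * ∑ j, (D j * Y j - (1 - D j) * Y j * πh j / (1 - πh j)) =
      (1 / ∑ j, πh j) * ∑ j, (D j * Y j - (1 - D j) * Y j * πh j / (1 - πh j)) := by
  have hsum : ∑ i, πh i = ∑ i, D i := hfit.sum_eq
  exact ⟨hsum, by rw [hsum]⟩

/-- The isotonic fit of binary treatment indicators satisfies `∑ π̂ᵢ = ∑ Dᵢ = n₁`;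
in particular the proposed PSM (inverse weighting) estimator `τ̂` coincides with the
Hirano–Imbens–Ridder estimator `τ̃`. -/
theorem psm_eq_hir {n : ℕ} (D Y πh : Fin n → ℝ)
    (hD : ∀ i, D i = 0 ∨ D i = 1)
    (hn1 : 0 < ∑ i, D i)
    (hfit : IsIsoFit D πh)
    (hlt : ∀ i, πh i < 1) :
    (∑ i, πh i = ∑ i, D i) ∧
    (1 / ∑ i, D i) * ∑ j, (D j * Y j - (1 - D j) * Y j * πh j / (1 - πh j)) =
      (1 / ∑ j, πh j) * ∑ j, (D j * Y j - (1 - D j) * Y j * πh j / (1 - πh j)) :=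
  psm_eq_hir_general D Y πh hfit
end

section
/- (Rosenbaum–Rubin.) Let (Ω, ℱ, P) be a probability space, let X be a random element, D a {0,1}-valued random variable, and W a random element (e.g., the pair of potential outcomes (Y(0), Y(1))). Let π(X) be a version of the conditional expectation E[D | σ(X)]. If D and W are conditionally independent given σ(X), then D and W are conditionally independent given σ(π(X)). -/
/-!
Write `m = σ(X)` and `n = σ(π(X)) ≤ m`. Since `D` takes only the values `0` and `1`, every
`f(D)` is the affine function `f 0 + (f 1 - f 0) D` of `D`, so conditional independence of `D`
and `W` given a σ-algebra reduces to `E[D g(W) | ·] = E[D | ·] E[g(W) | ·]`. Given `m` this is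
the hypothesis. It descends to `n` by the tower property, because the factor `E[D | m] = π(X)`
is `n`-measurable and can be pulled out of `E[· | n]`; for the same reason `E[D | n] = π(X)`.
-/

open MeasureTheory

/-- `U` and `W` are conditionally independent given the sub-σ-algebra `m`:
for all bounded measurable real test functions `f, g`,
`E[f(U) g(W) | m] = E[f(U) | m] · E[g(W) | m]` almost surely. -/
def CondIndepOn {Ω E F : Type*} [MeasurableSpace Ω] [MeasurableSpace E] [MeasurableSpace F]
    (P : Measure Ω) (m : MeasurableSpace Ω) (U : Ω → E) (W : Ω → F) : Prop :=
  ∀ (f : E → ℝ) (g : F → ℝ), Measurable f → Measurable g →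
    (∃ C, ∀ x, |f x| ≤ C) → (∃ C, ∀ x, |g x| ≤ C) →
    P[fun ω => f (U ω) * g (W ω)|m] =ᵐ[P]
      fun ω => (P[fun ω' => f (U ω')|m]) ω * (P[fun ω' => g (W ω')|m]) ω

section CondExp

variable {Ω : Type*} {n m m₀ : MeasurableSpace Ω} {P : Measure[m₀] Ω}

theorem condExp_smul_add_smul {u v : Ω → ℝ} (hu : Integrable u P) (hv : Integrable v P)
    (a b : ℝ) : P[a • u + b • v|m] =ᵐ[P] a • P[u|m] + b • P[v|m] :=
  (condExp_add (hu.smul a) (hv.smul b) m).trans ((condExp_smul a u m).add (condExp_smul b v m))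

theorem condExp_mul_ae_eq_of_le [IsFiniteMeasure P] {U V : Ω → ℝ} (hnm : n ≤ m) (hm : m ≤ m₀)
    (hU : AEStronglyMeasurable[n] (P[U|m]) P) (hUV : P[U * V|m] =ᵐ[P] P[U|m] * P[V|m]) :
    P[U * V|n] =ᵐ[P] P[U|n] * P[V|n] := by
  have hUn : P[U|n] =ᵐ[P] P[U|m] :=
    (condExp_condExp_of_le hnm hm).symm.trans
      (condExp_of_aestronglyMeasurable' (hnm.trans hm) hU integrable_condExp)
  calc P[U * V|n] =ᵐ[P] P[P[U * V|m]|n] := (condExp_condExp_of_le hnm hm).symm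
    _ =ᵐ[P] P[P[U|m] * P[V|m]|n] := condExp_congr_ae hUV
    _ =ᵐ[P] P[U|m] * P[P[V|m]|n] :=
      condExp_mul_of_aestronglyMeasurable_left hU (integrable_condExp.congr hUV)
        integrable_condExp
    _ =ᵐ[P] P[U|n] * P[V|n] := hUn.symm.mul (condExp_condExp_of_le hnm hm)

end CondExp

theorem eq_affine_of_eq_zero_or_eq_one (f : ℝ → ℝ) {x : ℝ} (hx : x = 0 ∨ x = 1) :
    f x = f 0 + (f 1 - f 0) * x := by
  rcases hx with rfl | rfl <;> ring

section Binary

variable {Ω F : Type*} [MeasurableSpace F] {m m₀ : MeasurableSpace Ω}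
  {P : Measure[m₀] Ω} [IsFiniteMeasure P] {D : Ω → ℝ} {W : Ω → F}

theorem condIndepOn_iff_of_eq_zero_or_eq_one (hm : m ≤ m₀) (hD : Measurable D)
    (hW : Measurable W) (hD01 : ∀ ω, D ω = 0 ∨ D ω = 1) :
    CondIndepOn P m D W ↔ ∀ g : F → ℝ, Measurable g → (∃ C, ∀ y, |g y| ≤ C) →
      P[D * (g ∘ W)|m] =ᵐ[P] P[D|m] * P[g ∘ W|m] := by
  constructor
  · intro h g hg hbg
    have hid : ∀ ω, (if D ω = 1 then (1 : ℝ) else 0) = D ω := fun ω => by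
      rcases hD01 ω with h' | h' <;> simp [h']
    have := h (fun x => if x = 1 then 1 else 0) g
      (measurable_const.ite (measurableSet_singleton 1) measurable_const) hg
      ⟨1, fun x => by split_ifs <;> simp⟩ hbg
    simp only [hid] at this
    exact this
  · intro h f g _ hg _ ⟨C, hC⟩
    have hDb : ∀ᵐ ω ∂P, ‖D ω‖ ≤ 1 :=
      ae_of_all _ fun ω => by rcases hD01 ω with h' | h' <;> simp [h']
    have hDi : Integrable D P := .of_bound hD.aestronglyMeasurable 1 hDb
    have hG : Integrable (g ∘ W) P :=
      .of_bound (hg.comp hW).aestronglyMeasurable C (ae_of_all _ fun ω => hC (W ω))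
    have hDG : Integrable (D * (g ∘ W)) P := hG.bdd_mul hD.aestronglyMeasurable hDb
    have hfD : (fun ω => f (D ω)) = f 0 • (fun _ => (1 : ℝ)) + (f 1 - f 0) • D := by
      funext ω; simp [eq_affine_of_eq_zero_or_eq_one f (hD01 ω)]
    have hfDG : (fun ω => f (D ω) * g (W ω)) = f 0 • (g ∘ W) + (f 1 - f 0) • (D * (g ∘ W)) := by
      funext ω; simp [eq_affine_of_eq_zero_or_eq_one f (hD01 ω)]; ring
    change _ =ᵐ[P] fun ω => _ * P[g ∘ W|m] ω
    rw [hfD, hfDG]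
    filter_upwards [condExp_smul_add_smul (m := m) (integrable_const 1) hDi (f 0) (f 1 - f 0),
      condExp_smul_add_smul (m := m) hG hDG (f 0) (f 1 - f 0), h g hg ⟨C, hC⟩]
      with ω hfD_ω hfDG_ω hDG_ω
    rw [hfD_ω, hfDG_ω, condExp_const hm]
    simp only [Pi.add_apply, Pi.smul_apply, Pi.mul_apply, smul_eq_mul] at hDG_ω ⊢
    rw [hDG_ω]
    ring

end Binary

/-- Rosenbaum–Rubin: if `π(X)` is a version of `E[D | σ(X)]` and `D ⟂ W | σ(X)`,
then `D ⟂ W | σ(π(X))`. -/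
theorem rosenbaum_rubin {Ω E F : Type*} [MeasurableSpace Ω] [MeasurableSpace E]
    [MeasurableSpace F]
    (P : Measure Ω) [IsProbabilityMeasure P]
    (X : Ω → E) (D : Ω → ℝ) (W : Ω → F)
    (hX : Measurable X) (hD : Measurable D) (hW : Measurable W)
    (hD01 : ∀ ω, D ω = 0 ∨ D ω = 1)
    (π : E → ℝ) (hπm : Measurable π)
    (hπ : (fun ω => π (X ω)) =ᵐ[P] P[D | MeasurableSpace.comap X inferInstance])
    (h : CondIndepOn P (MeasurableSpace.comap X inferInstance) D W) :
    CondIndepOn P (MeasurableSpace.comap (fun ω => π (X ω)) inferInstance) D W := by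
  have hnm : MeasurableSpace.comap (fun ω => π (X ω)) inferInstance ≤
      MeasurableSpace.comap X inferInstance :=
    (hπm.comp (comap_measurable X)).comap_le
  have hprop : AEStronglyMeasurable[MeasurableSpace.comap (fun ω => π (X ω)) inferInstance]
      (P[D | MeasurableSpace.comap X inferInstance]) P :=
    ⟨_, (comap_measurable _).stronglyMeasurable, hπ.symm⟩
  have hm := (condIndepOn_iff_of_eq_zero_or_eq_one hX.comap_le hD hW hD01).1 h
  exact (condIndepOn_iff_of_eq_zero_or_eq_one (hnm.trans hX.comap_le) hD hW hD01).2
    fun g hg hbg => condExp_mul_ae_eq_of_le hnm hX.comap_le hprop (hm g hg hbg)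
end

section
/- Suppose unconfoundedness holds, π(X) is a version of E[D | σ(X)] with c_0 ≤ π(X) ≤ 1 − c_0 almost surely for some constant c_0 ∈ (0, 1/2], Y(0) and Y(1) are integrable, and η = P(D = 1) > 0. Then, with Y = D·Y(1) + (1−D)·Y(0), the average treatment effect on the treated satisfies E[ Y(1) − Y(0) | D = 1 ] = (1/η) · E[ D·Y − (1−D)·Y·π(X)/(1−π(X)) ]. -/
/-!
The left side is `η⁻¹ E[D (Y(1) - Y(0))]` and the right side
`η⁻¹ (E[D Y(1)] - E[w (1 - D) Y(0)])` with the odds weight `w = π(X) / (1 - π(X))`,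
so everything reduces to `E[D Y(0)] = E[w (1 - D) Y(0)]`.
For bounded `G = g(Y(0))`, unconfoundedness gives `E[D G | X] = π(X) E[G | X]` and
`E[(1 - D) G | X] = (1 - π(X)) E[G | X]`; multiplying the second by the `X`-measurable weight `w`
turns it into the first. Truncating `Y(0)` and passing to the limit by dominated convergence
removes the boundedness of `G`.
-/

open MeasureTheory ProbabilityTheory Filter Topology

section

variable {Ω F : Type*} {m mΩ : MeasurableSpace Ω} [MeasurableSpace F] {P : Measure Ω}

theorem CondIndepOn.condExp_mul_of_abs_le {U : Ω → ℝ} {W : Ω → F} (h : CondIndepOn P m U W)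
    {C : ℝ} (hU : ∀ ω, |U ω| ≤ C) {g : F → ℝ} (hg : Measurable g) (hgb : ∃ K, ∀ y, |g y| ≤ K) :
    P[fun ω => U ω * g (W ω)|m] =ᵐ[P] fun ω => P[U|m] ω * P[fun ω => g (W ω)|m] ω := by
  set clamp : ℝ → ℝ := fun x => max (-C) (min C x)
  have hclamp : ∀ ω, clamp (U ω) = U ω := fun ω => by
    obtain ⟨hl, hr⟩ := abs_le.1 (hU ω)
    simp only [clamp, min_eq_right hr, max_eq_right hl]
  have hclamp_bdd : ∀ x, |clamp x| ≤ |C| := fun x =>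
    abs_le.2 ⟨(neg_le_neg (le_abs_self C)).trans (le_max_left _ _),
      max_le (neg_le_abs C) ((min_le_left _ _).trans (le_abs_self C))⟩
  simpa only [hclamp] using
    h clamp g (measurable_const.max (measurable_const.min measurable_id)) hg ⟨|C|, hclamp_bdd⟩ hgb

theorem integral_mul_eq_integral_ipw [IsFiniteMeasure P] (hm : m ≤ mΩ) {D G p w : Ω → ℝ}
    (hG : Integrable G P) (hDG : Integrable (fun ω => D ω * G ω) P)
    (hfac : P[fun ω => D ω * G ω|m] =ᵐ[P] fun ω => p ω * P[G|m] ω)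
    (hw : StronglyMeasurable[m] w) {K : ℝ} (hwb : ∀ᵐ ω ∂P, |w ω| ≤ K)
    (hwp : ∀ᵐ ω ∂P, w ω * (1 - p ω) = p ω) :
    ∫ ω, D ω * G ω ∂P = ∫ ω, w ω * (1 - D ω) * G ω ∂P := by
  have h1DG : (fun ω => (1 - D ω) * G ω) = G - fun ω => D ω * G ω := by
    funext ω; simp only [Pi.sub_apply]; ring
  have hfac' : P[fun ω => (1 - D ω) * G ω|m] =ᵐ[P] fun ω => (1 - p ω) * P[G|m] ω := by
    rw [h1DG]
    filter_upwards [condExp_sub hG hDG m, hfac] with ω h1 h2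
    rw [h1, Pi.sub_apply, h2]
    ring
  have hpull : P[w * fun ω => (1 - D ω) * G ω|m] =ᵐ[P] w * P[fun ω => (1 - D ω) * G ω|m] :=
    condExp_stronglyMeasurable_mul_of_bound hm hw (h1DG ▸ hG.sub hDG) K hwb
  calc ∫ ω, D ω * G ω ∂P = ∫ ω, p ω * P[G|m] ω ∂P := by
        rw [← integral_condExp hm]; exact integral_congr_ae hfac
    _ = ∫ ω, (w * P[fun ω => (1 - D ω) * G ω|m]) ω ∂P := by
        refine integral_congr_ae ?_
        filter_upwards [hfac', hwp] with ω h1 h2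
        rw [Pi.mul_apply, h1, ← mul_assoc, h2]
    _ = ∫ ω, w ω * (1 - D ω) * G ω ∂P := by
        rw [← integral_congr_ae hpull, integral_condExp hm]
        simp only [Pi.mul_apply, mul_assoc]

theorem tendsto_truncation (f : Ω → ℝ) (x : Ω) :
    Tendsto (fun A => truncation f A x) atTop (𝓝 (f x)) :=
  tendsto_const_nhds.congr' <| by
    filter_upwards [Ioi_mem_atTop |f x|] with A hA
    exact (truncation_eq_self hA).symm

theorem tendsto_integral_mul_truncation {w Y : Ω → ℝ} (hw : AEStronglyMeasurable w P) {K : ℝ}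
    (hwb : ∀ᵐ ω ∂P, |w ω| ≤ K) (hY : Integrable Y P) :
    Tendsto (fun A => ∫ ω, w ω * truncation Y A ω ∂P) atTop (𝓝 (∫ ω, w ω * Y ω ∂P)) := by
  refine tendsto_integral_filter_of_dominated_convergence (fun ω => K * |Y ω|)
    (Eventually.of_forall fun A => hw.mul hY.aestronglyMeasurable.truncation) ?_
    (hY.abs.const_mul K)
    (Eventually.of_forall fun ω => tendsto_const_nhds.mul (tendsto_truncation Y ω))
  filter_upwards with A
  filter_upwards [hwb] with ω hω
  rw [Real.norm_eq_abs, abs_mul]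
  exact mul_le_mul hω (abs_truncation_le_abs_self _ _ _) (abs_nonneg _) ((abs_nonneg _).trans hω)

theorem integral_cond {E : Type*} [NormedAddCommGroup E] [NormedSpace ℝ E] (s : Set Ω)
    (f : Ω → E) : ∫ ω, f ω ∂P[|s] = (P s).toReal⁻¹ • ∫ ω in s, f ω ∂P := by
  rw [ProbabilityTheory.cond, integral_smul_measure, ENNReal.toReal_inv]

theorem setIntegral_setOf_eq_one {D f : Ω → ℝ} (hD : Measurable D)
    (hD01 : ∀ ω, D ω = 0 ∨ D ω = 1) : ∫ ω in {ω | D ω = 1}, f ω ∂P = ∫ ω, D ω * f ω ∂P := by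
  rw [← integral_indicator (measurableSet_eq_fun hD measurable_const)]
  congr 1 with ω
  rcases hD01 ω with h | h <;> simp [h]

theorem abs_div_one_sub_le {c p : ℝ} (hc : 0 < c) (hlo : c ≤ p) (hhi : p ≤ 1 - c) :
    |p / (1 - p)| ≤ (1 - c) / c := by
  rw [abs_of_nonneg (div_nonneg (by linarith) (by linarith))]
  exact div_le_div₀ (by linarith) (by linarith) hc (by linarith)

theorem MeasureTheory.Integrable.mul_div_one_sub {Y p : Ω → ℝ} (hY : Integrable Y P)
    (hp : AEStronglyMeasurable p P) {c : ℝ} (hc : 0 < c)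
    (hpc : ∀ᵐ ω ∂P, c ≤ p ω ∧ p ω ≤ 1 - c) :
    Integrable (fun ω => Y ω * p ω / (1 - p ω)) P := by
  have hw : AEStronglyMeasurable (fun ω => p ω / (1 - p ω)) P :=
    (hp.aemeasurable.div (aemeasurable_const.sub hp.aemeasurable)).aestronglyMeasurable
  refine (hY.bdd_mul hw (c := (1 - c) / c) ?_).congr
    (Eventually.of_forall fun ω => by ring)
  filter_upwards [hpc] with ω h
  simpa only [Real.norm_eq_abs] using abs_div_one_sub_le hc h.1 h.2

theorem CondIndepOn.integral_mul_comp_eq_integral_ipw [IsFiniteMeasure P] (hm : m ≤ mΩ)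
    {D p w : Ω → ℝ} {W : Ω → F} (h : CondIndepOn P m D W) (hD : Measurable D)
    (hDb : ∀ ω, |D ω| ≤ 1) (hp : p =ᵐ[P] P[D|m]) (hw : StronglyMeasurable[m] w) {K : ℝ}
    (hwb : ∀ᵐ ω ∂P, |w ω| ≤ K) (hwp : ∀ᵐ ω ∂P, w ω * (1 - p ω) = p ω) {g : F → ℝ}
    (hg : Measurable g) (hgb : ∃ C, ∀ y, |g y| ≤ C)
    (hgW : AEStronglyMeasurable (fun ω => g (W ω)) P) :
    ∫ ω, D ω * g (W ω) ∂P = ∫ ω, w ω * (1 - D ω) * g (W ω) ∂P := by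
  obtain ⟨C, hC⟩ := hgb
  have hG : Integrable (fun ω => g (W ω)) P :=
    Integrable.of_bound hgW C (Eventually.of_forall fun ω => by
      simpa only [Real.norm_eq_abs] using hC (W ω))
  refine integral_mul_eq_integral_ipw hm hG
    (hG.bdd_mul hD.aestronglyMeasurable (Eventually.of_forall hDb)) ?_ hw hwb hwp
  filter_upwards [h.condExp_mul_of_abs_le hDb hg ⟨C, hC⟩, hp] with ω h1 h2
  rw [h1, h2]

theorem CondIndepOn.integral_mul_eq_integral_mul_div_one_sub [IsFiniteMeasure P] (hm : m ≤ mΩ)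
    {D p : Ω → ℝ} {W : Ω → F} (h : CondIndepOn P m D W) (hD : Measurable D)
    (hD01 : ∀ ω, D ω = 0 ∨ D ω = 1) (hpm : Measurable[m] p) (hp : p =ᵐ[P] P[D|m]) {c : ℝ}
    (hc : 0 < c) (hpc : ∀ᵐ ω ∂P, c ≤ p ω ∧ p ω ≤ 1 - c) {φ : F → ℝ} (hφ : Measurable φ)
    (hY : Integrable (fun ω => φ (W ω)) P) :
    ∫ ω, D ω * φ (W ω) ∂P = ∫ ω, (1 - D ω) * φ (W ω) * p ω / (1 - p ω) ∂P := by
  set w : Ω → ℝ := fun ω => p ω / (1 - p ω)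
  have hw : Measurable[m] w := hpm.div (measurable_const.sub hpm)
  have hwb : ∀ᵐ ω ∂P, |w ω| ≤ (1 - c) / c :=
    hpc.mono fun ω h => abs_div_one_sub_le hc h.1 h.2
  have hwp : ∀ᵐ ω ∂P, w ω * (1 - p ω) = p ω :=
    hpc.mono fun ω h => div_mul_cancel₀ _ (by linarith [h.2])
  have hDb : ∀ ω, |D ω| ≤ 1 := fun ω => by rcases hD01 ω with h | h <;> simp [h]
  have hw1Db : ∀ᵐ ω ∂P, |w ω * (1 - D ω)| ≤ (1 - c) / c := by
    filter_upwards [hwb] with ω hω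
    rcases hD01 ω with h | h <;> simp [h, hω, (abs_nonneg _).trans hω]
  have htrunc : ∀ A, ∫ ω, D ω * truncation (fun ω => φ (W ω)) A ω ∂P
      = ∫ ω, w ω * (1 - D ω) * truncation (fun ω => φ (W ω)) A ω ∂P := fun A =>
    h.integral_mul_comp_eq_integral_ipw hm hD hDb hp hw.stronglyMeasurable hwb hwp
      (g := fun y => (Set.Ioc (-A) A).indicator id (φ y))
      ((measurable_id.indicator measurableSet_Ioc).comp hφ)
      ⟨|A|, fun y => abs_truncation_le_bound (fun _ : Unit => φ y) A ()⟩
      hY.1.truncation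
  calc ∫ ω, D ω * φ (W ω) ∂P = ∫ ω, w ω * (1 - D ω) * φ (W ω) ∂P :=
        tendsto_nhds_unique
          ((tendsto_integral_mul_truncation hD.aestronglyMeasurable
            (Eventually.of_forall hDb) hY).congr htrunc)
          (tendsto_integral_mul_truncation
            ((hw.mono hm le_rfl).mul (measurable_const.sub hD)).aestronglyMeasurable hw1Db hY)
    _ = ∫ ω, (1 - D ω) * φ (W ω) * p ω / (1 - p ω) ∂P := by
        congr 1 with ω
        ring

end

theorem att_ipw_identity_general {Ω E : Type*} [MeasurableSpace Ω] [MeasurableSpace E]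
    (P : Measure Ω) [IsProbabilityMeasure P]
    (X : Ω → E) (D Y0 Y1 : Ω → ℝ)
    (hX : Measurable X) (hD : Measurable D)
    (hD01 : ∀ ω, D ω = 0 ∨ D ω = 1)
    (hunconf : CondIndepOn P (MeasurableSpace.comap X inferInstance) D
      (fun ω => (Y0 ω, Y1 ω)))
    (π : E → ℝ) (hπm : Measurable π)
    (hπ : (fun ω => π (X ω)) =ᵐ[P] P[D | MeasurableSpace.comap X inferInstance])
    (c0 : ℝ) (hc0 : 0 < c0)
    (hπc : ∀ᵐ ω ∂P, c0 ≤ π (X ω) ∧ π (X ω) ≤ 1 - c0)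
    (hY0int : Integrable Y0 P) (hY1int : Integrable Y1 P) :
    ∫ ω, (Y1 ω - Y0 ω) ∂(ProbabilityTheory.cond P {ω | D ω = 1}) =
      (1 / (P {ω | D ω = 1}).toReal) *
        ∫ ω, (D ω * (D ω * Y1 ω + (1 - D ω) * Y0 ω)
          - (1 - D ω) * (D ω * Y1 ω + (1 - D ω) * Y0 ω) * π (X ω) / (1 - π (X ω))) ∂P := by
  have hD_int : ∀ {Y : Ω → ℝ}, Integrable Y P → Integrable (fun ω => D ω * Y ω) P := fun hY =>
    hY.bdd_mul hD.aestronglyMeasurable (c := 1) (Eventually.of_forall fun ω => by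
      rcases hD01 ω with h | h <;> simp [h])
  have h1D_int : Integrable (fun ω => (1 - D ω) * Y0 ω) P :=
    hY0int.bdd_mul (measurable_const.sub hD).aestronglyMeasurable (c := 1)
      (Eventually.of_forall fun ω => by rcases hD01 ω with h | h <;> simp [h])
  have hY0 : ∫ ω, D ω * Y0 ω ∂P = ∫ ω, (1 - D ω) * Y0 ω * π (X ω) / (1 - π (X ω)) ∂P :=
    hunconf.integral_mul_eq_integral_mul_div_one_sub hX.comap_le hD hD01
      (hπm.comp (comap_measurable X)) hπ hc0 hπc measurable_fst hY0int
  have hrhs : ∀ ω, D ω * (D ω * Y1 ω + (1 - D ω) * Y0 ω)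
      - (1 - D ω) * (D ω * Y1 ω + (1 - D ω) * Y0 ω) * π (X ω) / (1 - π (X ω))
      = D ω * Y1 ω - (1 - D ω) * Y0 ω * π (X ω) / (1 - π (X ω)) := fun ω => by
    rcases hD01 ω with h | h <;> simp [h]
  rw [integral_cond, setIntegral_setOf_eq_one hD hD01, smul_eq_mul, one_div, funext hrhs]
  congr 1
  calc ∫ ω, D ω * (Y1 ω - Y0 ω) ∂P = ∫ ω, D ω * Y1 ω ∂P - ∫ ω, D ω * Y0 ω ∂P := by
        simp only [mul_sub]
        exact integral_sub (hD_int hY1int) (hD_int hY0int)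
    _ = _ := by
        rw [hY0, integral_sub (hD_int hY1int)
          (h1D_int.mul_div_one_sub (p := fun ω => π (X ω)) (hπm.comp hX).aestronglyMeasurable
            hc0 hπc)]

/-- ATT identification by inverse probability weighting: under unconfoundedness,
with `c₀ ≤ π(X) ≤ 1 - c₀` a.s., `Y(0), Y(1)` integrable and `η = P(D = 1) > 0`,
`E[Y(1) - Y(0) | D = 1] = η⁻¹ E[D·Y - (1-D)·Y·π(X)/(1-π(X))]`,
where `Y = D·Y(1) + (1-D)·Y(0)`. -/
theorem att_ipw_identity {Ω E : Type*} [MeasurableSpace Ω] [MeasurableSpace E]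
    (P : Measure Ω) [IsProbabilityMeasure P]
    (X : Ω → E) (D Y0 Y1 : Ω → ℝ)
    (hX : Measurable X) (hD : Measurable D) (hY0 : Measurable Y0) (hY1 : Measurable Y1)
    (hD01 : ∀ ω, D ω = 0 ∨ D ω = 1)
    (hunconf : CondIndepOn P (MeasurableSpace.comap X inferInstance) D
      (fun ω => (Y0 ω, Y1 ω)))
    (π : E → ℝ) (hπm : Measurable π)
    (hπ : (fun ω => π (X ω)) =ᵐ[P] P[D | MeasurableSpace.comap X inferInstance])
    (c0 : ℝ) (hc0 : 0 < c0) (hc0' : c0 ≤ 1 / 2)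
    (hπc : ∀ᵐ ω ∂P, c0 ≤ π (X ω) ∧ π (X ω) ≤ 1 - c0)
    (hY0int : Integrable Y0 P) (hY1int : Integrable Y1 P)
    (hη : 0 < (P {ω | D ω = 1}).toReal) :
    ∫ ω, (Y1 ω - Y0 ω) ∂(ProbabilityTheory.cond P {ω | D ω = 1}) =
      (1 / (P {ω | D ω = 1}).toReal) *
        ∫ ω, (D ω * (D ω * Y1 ω + (1 - D ω) * Y0 ω)
          - (1 - D ω) * (D ω * Y1 ω + (1 - D ω) * Y0 ω) * π (X ω) / (1 - π (X ω))) ∂P :=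
  att_ipw_identity_general P X D Y0 Y1 hX hD hD01 hunconf π hπm hπ c0 hc0 hπc hY0int hY1int
end
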